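/- arXiv:1606.07516 — 2 statements merged into one kernel-verified Lean document; each statement's English description precedes it below -/
import Mathlib

section
/- Starting from the initial situation where each agent knows only its own secret, the sequence of push-pull calls (a,i₁), (a,i₂), ..., (a,i_{n-4}), (a,b), (c,d), (a,c), (b,d), (i₁,b), (i₂,b), ..., (i_{n-4},b) of length 2n−4 makes every agent an expert (familiar with all n secrets), where the agents are a, b, c, d, i₁, ..., i_{n-4} and n ≥ 4. -/
/-- The effect of a push-pull call `(a,b)`: both agents learn the union of their secrets. -/
def pushPullCall {A P : Type*} [DecidableEq A] [DecidableEq P] (c : A × A)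
    (s : A → Finset P) : A → Finset P :=
  fun x => if x = c.1 ∨ x = c.2 then s c.1 ∪ s c.2 else s x

/-- Applying a finite list of push-pull calls, in order, to a gossip situation. -/
def runCalls {A P : Type*} [DecidableEq A] [DecidableEq P] (cs : List (A × A))
    (s : A → Finset P) : A → Finset P :=
  cs.foldl (fun t c => pushPullCall c t) s

/-- The initial gossip situation: each agent (a natural number) knows only its own secret. -/
def initSit : ℕ → Finset ℕ := fun x => {x}

/-- The call sequence `(a,i₁),…,(a,i_{n-4}),(a,b),(c,d),(a,c),(b,d),(i₁,b),…,(i_{n-4},b)`,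
where the agents `a, b, c, d, i₁, …, i_{n-4}` are coded as `0, 1, 2, 3, 4, …, n-1`. -/
def shortestSeq (n : ℕ) : List (ℕ × ℕ) :=
  ((List.range (n - 4)).map fun k => (0, k + 4)) ++
    [(0, 1), (2, 3), (0, 2), (1, 3)] ++
    ((List.range (n - 4)).map fun k => (k + 4, 1))

lemma runCalls_append {A P : Type*} [DecidableEq A] [DecidableEq P]
    (l1 l2 : List (A × A)) (s : A → Finset P) :
    runCalls (l1 ++ l2) s = runCalls l2 (runCalls l1 s) := by
  simp [runCalls, List.foldl_append]

lemma pushPull_mono {A P : Type*} [DecidableEq A] [DecidableEq P]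
    (c : A × A) (s : A → Finset P) (x : A) : s x ⊆ pushPullCall c s x := by
  unfold pushPullCall
  split
  · rename_i h
    rcases h with h | h <;> subst h
    · exact Finset.subset_union_left
    · exact Finset.subset_union_right
  · exact subset_rfl

lemma runCalls_mono {A P : Type*} [DecidableEq A] [DecidableEq P]
    (cs : List (A × A)) (s : A → Finset P) (x : A) : s x ⊆ runCalls cs s x := by
  induction cs generalizing s with
  | nil => exact subset_rfl
  | cons c cs ih =>
    exact (pushPull_mono c s x).trans (ih (pushPullCall c s))

lemma gather_lemma (m : ℕ) :
    {0} ∪ Finset.Ico 4 (m + 4) ⊆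
      runCalls ((List.range m).map fun k => (0, k + 4)) initSit 0 := by
  induction m with
  | zero =>
    intro j hj
    simp only [Finset.Ico_self, Finset.union_empty, Finset.mem_singleton] at hj
    subst hj
    simp [runCalls, initSit]
  | succ m ih =>
    rw [List.range_succ, List.map_append, List.map_cons, List.map_nil, runCalls_append]
    set t := runCalls ((List.range m).map fun k => (0, k + 4)) initSit with ht
    intro j hj
    have hnew : runCalls [(0, m + 4)] t 0 = t 0 ∪ t (m + 4) := by
      simp [runCalls, pushPullCall]
    rw [hnew]
    simp only [Finset.mem_union, Finset.mem_singleton, Finset.mem_Ico] at hj ⊢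
    rcases hj with hj | ⟨h4, hlt⟩
    · exact Or.inl (ih (by simp [hj]))
    · rcases Nat.lt_succ_iff_lt_or_eq.mp (by omega : j < (m + 4) + 1) with h | h
      · exact Or.inl (ih (by simp [Finset.mem_Ico]; omega))
      · subst h
        exact Or.inr (runCalls_mono _ initSit (m + 4) (by simp [initSit]))

lemma spread_lemma (m : ℕ) (s : ℕ → Finset ℕ) (F : Finset ℕ) (h1 : F ⊆ s 1) :
    ∀ x, (x = 1 ∨ (4 ≤ x ∧ x < m + 4)) →
      F ⊆ runCalls ((List.range m).map fun k => (k + 4, 1)) s x := by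
  induction m with
  | zero =>
    rintro x (rfl | ⟨h4, hlt⟩)
    · simpa [runCalls] using h1
    · omega
  | succ m ih =>
    rw [List.range_succ, List.map_append, List.map_cons, List.map_nil, runCalls_append]
    set t := runCalls ((List.range m).map fun k => (k + 4, 1)) s with ht
    have hF1 : F ⊆ t 1 := ih 1 (Or.inl rfl)
    rintro x (rfl | ⟨h4, hlt⟩)
    · have : runCalls [(m + 4, 1)] t 1 = t (m + 4) ∪ t 1 := by
        simp [runCalls, pushPullCall]
      rw [this]
      exact hF1.trans Finset.subset_union_right
    · rcases Nat.lt_succ_iff_lt_or_eq.mp (by omega : x < (m + 4) + 1) with h | h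
      · have hx1 : x ≠ 1 := by omega
        have hxm : x ≠ m + 4 := by omega
        have : runCalls [(m + 4, 1)] t x = t x := by
          simp [runCalls, pushPullCall, hx1, hxm]
        rw [this]
        exact ih x (Or.inr ⟨h4, h⟩)
      · subst h
        have : runCalls [(m + 4, 1)] t (m + 4) = t (m + 4) ∪ t 1 := by
          simp [runCalls, pushPullCall]
        rw [this]
        exact hF1.trans Finset.subset_union_right

/-- Starting from the initial situation, the above sequence of `2n - 4` push-pull calls
makes every one of the `n ≥ 4` agents an expert (familiar with all `n` secrets). -/
theorem shortest_sequence_makes_everyone_expert (n : ℕ) (hn : 4 ≤ n) :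
    (shortestSeq n).length = 2 * n - 4 ∧
      ∀ i < n, ∀ j < n, j ∈ runCalls (shortestSeq n) initSit i := by
  have hm4 : n - 4 + 4 = n := by omega
  constructor
  · simp [shortestSeq]
    omega
  · -- decompose the sequence
    have hsplit : shortestSeq n =
        (((List.range (n - 4)).map fun k => (0, k + 4)) ++
          [(0, 1), (2, 3), (0, 2), (1, 3)]) ++
          ((List.range (n - 4)).map fun k => (k + 4, 1)) := rfl
    rw [hsplit, runCalls_append, runCalls_append]
    set s1 := runCalls ((List.range (n - 4)).map fun k => (0, k + 4)) initSit with hs1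
    set s2 := runCalls [(0, 1), (2, 3), (0, 2), (1, 3)] s1 with hs2
    have h0 : {0} ∪ Finset.Ico 4 n ⊆ s1 0 := by
      have := gather_lemma (n - 4)
      rwa [hm4] at this
    have hself : ∀ x : ℕ, x ∈ s1 x := fun x =>
      runCalls_mono _ initSit x (by simp [initSit])
    -- compute s2 on 0,1,2,3
    have hs2val : ∀ x < 4, s2 x = (s1 0 ∪ s1 1) ∪ (s1 2 ∪ s1 3) := by
      intro x hx
      interval_cases x <;> simp [hs2, runCalls, pushPullCall]
    have hF : ∀ x < 4, Finset.range n ⊆ s2 x := by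
      intro x hx
      rw [hs2val x hx]
      intro j hj
      rw [Finset.mem_range] at hj
      simp only [Finset.mem_union]
      by_cases hj0 : j = 0
      · exact Or.inl (Or.inl (h0 (by simp [hj0])))
      · by_cases hj1 : j = 1
        · exact Or.inl (Or.inr (hj1 ▸ hself 1))
        · by_cases hj2 : j = 2
          · exact Or.inr (Or.inl (hj2 ▸ hself 2))
          · by_cases hj3 : j = 3
            · exact Or.inr (Or.inr (hj3 ▸ hself 3))
            · exact Or.inl (Or.inl (h0 (by simp [Finset.mem_Ico]; omega)))
    have hspread := spread_lemma (n - 4) s2 (Finset.range n) (hF 1 (by norm_num))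
    rw [hm4] at hspread
    intro i hi j hj
    have hjmem : j ∈ Finset.range n := Finset.mem_range.mpr hj
    by_cases hi4 : i < 4
    · by_cases hi1 : i = 1
      · exact hspread i (Or.inl hi1) hjmem
      · exact runCalls_mono _ s2 i (hF i hi4 hjmem)
    · exact hspread i (Or.inr ⟨by omega, hi⟩) hjmem
end

section
/- Abstract fair termination lemma for ring protocols (as used for R3 and R4): consider n processes on a directed ring where each process, once it performs its action after all its ring-predecessors (in the appropriate order) have performed theirs, becomes permanently disabled. In any infinite fair execution (fair: every process enabled infinitely often acts infinitely often) either some process becomes disabled—in which case by induction around the ring all processes successively become disabled, contradicting infiniteness—or no process ever becomes disabled, in which case by fairness every process acts infinitely often, so the disabling sequence of calls occurs, again a contradiction. Hence every fair execution is finite. -/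
/-- Abstract fair termination lemma for ring protocols (as used for R3 and R4).
`n ≥ 3` processes are arranged on a directed ring (`ZMod n`); `act t` is the process
acting at step `t` of a putative infinite execution. Process `i` is disabled at time `t`
exactly when the sequence of actions by `i⊕2, i⊕3, …, i` (each acting once, in ring
order, possibly interleaved with other actions) has occurred before `t`. A disabled
process never acts, and the execution is fair: every process that is enabled at
infinitely many points acts infinitely often. Then no such infinite execution exists. -/
theorem ring_fair_termination (n : ℕ) [NeZero n] (hn : 3 ≤ n)
    (act : ℕ → ZMod n) (Disabled : ZMod n → ℕ → Prop)
    (hdis : ∀ (i : ZMod n) (t : ℕ), Disabled i t ↔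
      ∃ f : Fin (n - 1) → ℕ, StrictMono f ∧ (∀ k, f k < t) ∧
        ∀ k : Fin (n - 1), act (f k) = i + 2 + ((k : ℕ) : ZMod n))
    (hact : ∀ t : ℕ, ¬ Disabled (act t) t)
    (hfair : ∀ i : ZMod n, (∀ t : ℕ, ∃ t', t ≤ t' ∧ ¬ Disabled i t') →
      ∀ t : ℕ, ∃ t', t ≤ t' ∧ act t' = i) :
    False := by
  have h2n : 2 ≤ n := by omega
  -- `A j` : process `j` acts cofinally.
  set A : ZMod n → Prop := fun j => ∀ t : ℕ, ∃ t', t ≤ t' ∧ act t' = j with hA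
  -- Step lemma: A (i+1) → A i.
  have hstep : ∀ i : ZMod n, A (i + 1) → A i := by
    intro i hA1
    by_contra hAi
    -- fairness contrapositive: i is eventually permanently disabled
    have hperm : ∃ t, ∀ t', t ≤ t' → Disabled i t' := by
      by_contra h
      push_neg at h
      exact hAi (hfair i (fun t => by
        obtain ⟨t', ht', hnd⟩ := h t
        exact ⟨t', ht', hnd⟩))
    obtain ⟨t, ht⟩ := hperm
    obtain ⟨f, hfmono, hflt, hfact⟩ := (hdis i t).mp (ht t le_rfl)
    -- first action of i+1 after t
    obtain ⟨s, hts, hsact⟩ := hA1 t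
    -- second action of i+1 after s
    obtain ⟨s', hss', hs'act⟩ := hA1 (s + 1)
    -- build a disabling witness for i+1 at time s'
    have hdis1 : Disabled (i + 1) s' := by
      rw [hdis]
      refine ⟨fun k => if h : (k : ℕ) + 1 < n - 1 then f ⟨(k : ℕ) + 1, h⟩ else s, ?_, ?_, ?_⟩
      · intro a b hab
        dsimp only
        have hab' : (a : ℕ) < (b : ℕ) := hab
        by_cases hb : (b : ℕ) + 1 < n - 1
        · have ha : (a : ℕ) + 1 < n - 1 := by omega
          rw [dif_pos ha, dif_pos hb]
          exact hfmono (show ((⟨(a:ℕ)+1, ha⟩ : Fin (n-1)) : ℕ) < (⟨(b:ℕ)+1, hb⟩ : Fin (n-1))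
            from by simpa using Nat.succ_lt_succ hab')
        · by_cases ha : (a : ℕ) + 1 < n - 1
          · rw [dif_pos ha, dif_neg hb]
            exact lt_of_lt_of_le (hflt _) hts
          · exfalso
            have := b.isLt
            omega
      · intro k
        dsimp only
        by_cases h : (k : ℕ) + 1 < n - 1
        · rw [dif_pos h]
          exact lt_of_lt_of_le (lt_of_lt_of_le (hflt _) hts) (by omega)
        · rw [dif_neg h]; omega
      · intro k
        dsimp only
        by_cases h : (k : ℕ) + 1 < n - 1
        · rw [dif_pos h]
          have := hfact ⟨(k : ℕ) + 1, h⟩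
          rw [this]
          push_cast
          ring
        · rw [dif_neg h]
          have hk : (k : ℕ) = n - 2 := by have := k.isLt; omega
          rw [hsact, hk]
          have : ((n - 2 : ℕ) : ZMod n) = -2 := by
            have : ((n - 2 : ℕ) : ZMod n) = (n : ZMod n) - 2 := by
              push_cast [Nat.cast_sub h2n]; ring
            rw [this, ZMod.natCast_self]; ring
          rw [this]; ring
    have := hact s'
    rw [hs'act] at this
    exact this hdis1
  -- Pigeonhole: some process acts cofinally.
  have hex : ∃ j0 : ZMod n, A j0 := by
    obtain ⟨j0, hj0⟩ := Finite.exists_infinite_fiber act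
    refine ⟨j0, fun t => ?_⟩
    have hinf : (act ⁻¹' {j0}).Infinite := Set.infinite_coe_iff.mp hj0
    by_contra h
    push_neg at h
    apply hinf
    apply Set.Finite.subset (Set.finite_Iio t)
    intro x hx
    simp only [Set.mem_preimage, Set.mem_singleton_iff] at hx
    by_contra hxt
    simp only [Set.mem_Iio, not_lt] at hxt
    exact (h x hxt) hx
  obtain ⟨j0, hj0⟩ := hex
  -- propagate around the ring: everyone acts cofinally
  have hiter : ∀ m : ℕ, A (j0 - m) := by
    intro m
    induction m with
    | zero => simpa using hj0
    | succ m ih =>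
      apply hstep
      have : j0 - ((m + 1 : ℕ) : ZMod n) + 1 = j0 - m := by push_cast; ring
      rwa [this]
  have hAall : ∀ j : ZMod n, A j := by
    intro j
    have := hiter (j0 - j).val
    rwa [ZMod.natCast_val, ZMod.cast_id, sub_sub_cancel] at this
  -- build the disabling sequence for process 0
  let F : ℕ → ℕ := fun k => Nat.rec (hAall 2 0).choose
    (fun k ih => (hAall (2 + ((k + 1 : ℕ) : ZMod n)) (ih + 1)).choose) k
  have hFs : ∀ k : ℕ, F k < F (k + 1) ∧ act (F (k + 1)) = 2 + ((k + 1 : ℕ) : ZMod n) := by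
    intro k
    have h := (hAall (2 + ((k + 1 : ℕ) : ZMod n)) (F k + 1)).choose_spec
    exact ⟨lt_of_lt_of_le (Nat.lt_succ_self _) h.1, h.2⟩
  have hFmono : StrictMono F := strictMono_nat_of_lt_succ (fun k => (hFs k).1)
  have hFact : ∀ k : ℕ, act (F k) = 2 + (k : ZMod n) := by
    intro k
    cases k with
    | zero =>
      have h := (hAall 2 0).choose_spec.2
      simp only [Nat.cast_zero, add_zero]
      exact h
    | succ k => exact (hFs k).2
  obtain ⟨s, hs, hsact⟩ := hAall 0 (F (n - 2) + 1)
  have hdis0 : Disabled 0 s := by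
    rw [hdis]
    refine ⟨fun k => F k, hFmono.comp (fun a b h => h), fun k => ?_, fun k => ?_⟩
    · have hk : (k : ℕ) ≤ n - 2 := by have := k.isLt; omega
      calc F (k : ℕ) ≤ F (n - 2) := hFmono.monotone hk
        _ < s := by omega
    · rw [hFact]; ring
  have := hact s
  rw [hsact] at this
  exact this hdis0
end
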